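/- arXiv:1307.0089 — 2 statements merged into one kernel-verified Lean document; each statement's English description precedes it below -/
import Mathlib

section
/- Let G be a finite group, H a subgroup, and N a normal subgroup of G with N ≤ H. If H is Π-supplemented in G, then H/N is Π-supplemented in G/N. -/
open scoped Pointwise

/-- `(K, L)` is a chief factor of `G`: both normal, `K < L`, and no normal
subgroup of `G` lies strictly between them (equivalently `L/K` is a minimal
normal subgroup of `G/K`). -/
def IsChiefFactor (G : Type*) [Group G] (K L : Subgroup G) : Prop :=
  K.Normal ∧ L.Normal ∧ K < L ∧
    ∀ N : Subgroup G, N.Normal → K ≤ N → N ≤ L → N = K ∨ N = L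

/-- `H` satisfies the Π-property in `G`: for every chief factor `L/K` of `G`,
every prime dividing `|G/K : N_{G/K}(HK/K ∩ L/K)|` divides `|HK/K ∩ L/K|`. -/
def PiProperty (G : Type*) [Group G] (H : Subgroup G) : Prop :=
  ∀ (K L : Subgroup G) (hK : K.Normal), IsChiefFactor G K L →
    ∀ p : ℕ, p.Prime →
      p ∣ (Subgroup.normalizer ((Subgroup.map (@QuotientGroup.mk' G _ K hK) H ⊓
            Subgroup.map (@QuotientGroup.mk' G _ K hK) L : Subgroup (G ⧸ K)) : Set (G ⧸ K))).index →
      p ∣ Nat.card ↥(Subgroup.map (@QuotientGroup.mk' G _ K hK) H ⊓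
            Subgroup.map (@QuotientGroup.mk' G _ K hK) L)

/-- `H` is Π-supplemented in `G`. -/
def PiSupplemented (G : Type*) [Group G] (H : Subgroup G) : Prop :=
  ∃ T : Subgroup G, (H : Set G) * (T : Set G) = (Set.univ : Set G) ∧
    ∃ I : Subgroup G, H ⊓ T ≤ I ∧ I ≤ H ∧ PiProperty G I

/-! Everything is transported along the surjection `f : G → G ⧸ N`. The image of a supplement
is a supplement, and `ker f ≤ H` gives `f H ⊓ f T = f (H ⊓ T) ≤ f I`. A chief factor `L/K`
of the image pulls back to the chief factor `f⁻¹L/f⁻¹K` of `G`, and the isomorphism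
`G ⧸ f⁻¹K ≃* (G ⧸ N) ⧸ K` carries the subgroup that the Π-property of `I` controls at
`f⁻¹L/f⁻¹K` onto the one that the Π-property of `f I` has to control at `L/K`; isomorphisms
preserve orders and indices of normalizers. -/

section

variable {G Q : Type*} [Group G] [Group Q]

namespace Subgroup

theorem map_inf_of_ker_le {f : G →* Q} {H : Subgroup G} (hH : f.ker ≤ H) (T : Subgroup G) :
    (H ⊓ T).map f = H.map f ⊓ T.map f := by
  refine le_antisymm (map_inf_le H T f) ?_
  rintro _ ⟨⟨a, ha, rfl⟩, b, hb, hab⟩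
  have hba : a⁻¹ * b ∈ H := hH <| by simp [hab]
  exact ⟨b, ⟨by simpa using H.mul_mem ha hba, hb⟩, hab⟩

theorem index_normalizer_map_equiv (e : G ≃* Q) (S : Subgroup G) :
    (normalizer (S.map e.toMonoidHom : Set Q)).index = (normalizer (S : Set G)).index := by
  rw [← map_equiv_normalizer_eq]
  exact index_map_equiv _ e

end Subgroup

theorem exists_mulEquiv_quotient_comap {f : G →* Q} (hf : Function.Surjective f)
    (K : Subgroup Q) [K.Normal] :
    ∃ e : G ⧸ K.comap f ≃* Q ⧸ K,
      e.toMonoidHom.comp (QuotientGroup.mk' _) = (QuotientGroup.mk' K).comp f := by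
  let φ := (QuotientGroup.mk' K).comp f
  have hφ : Function.Surjective φ := (QuotientGroup.mk'_surjective K).comp hf
  have hker : K.comap f = φ.ker := by rw [← MonoidHom.comap_ker, QuotientGroup.ker_mk']
  exact ⟨(QuotientGroup.quotientMulEquivOfEq hker).trans
    (QuotientGroup.quotientKerEquivOfSurjective φ hφ), rfl⟩

theorem IsChiefFactor.comap {f : G →* Q} (hf : Function.Surjective f) {K L : Subgroup Q}
    (hKL : IsChiefFactor Q K L) :
    IsChiefFactor G (K.comap f) (L.comap f) := by
  obtain ⟨hK, hL, hlt, hmin⟩ := hKL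
  refine ⟨hK.comap f, hL.comap f, Subgroup.comap_lt_comap_of_surjective hf |>.mpr hlt,
    fun M hM hKM hML => ?_⟩
  have hM_eq : (M.map f).comap f = M :=
    Subgroup.comap_map_eq_self ((Subgroup.ker_le_comap f K).trans hKM)
  have hKM' : K ≤ M.map f := by
    simpa [Subgroup.map_comap_eq_self_of_surjective hf] using Subgroup.map_mono (f := f) hKM
  have hML' : M.map f ≤ L := Subgroup.map_le_iff_le_comap.mpr hML
  rcases hmin (M.map f) (hM.map f hf) hKM' hML' with h | h
  · exact .inl (by rw [← hM_eq, h])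
  · exact .inr (by rw [← hM_eq, h])

theorem PiProperty.map {f : G →* Q} (hf : Function.Surjective f) {I : Subgroup G}
    (hI : PiProperty G I) :
    PiProperty Q (I.map f) := by
  intro K L hK hKL p hp hdvd
  obtain ⟨e, he⟩ := exists_mulEquiv_quotient_comap hf K
  have hmap : ∀ S : Subgroup G,
      (S.map (QuotientGroup.mk' (K.comap f))).map e.toMonoidHom =
        (S.map f).map (QuotientGroup.mk' K) := by
    intro S
    rw [Subgroup.map_map, Subgroup.map_map, he]
  have hX : ((I.map (QuotientGroup.mk' (K.comap f))) ⊓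
      (L.comap f).map (QuotientGroup.mk' (K.comap f))).map e.toMonoidHom =
        (I.map f).map (QuotientGroup.mk' K) ⊓ L.map (QuotientGroup.mk' K) := by
    rw [Subgroup.map_inf_eq _ _ _ e.injective, hmap, hmap,
      Subgroup.map_comap_eq_self_of_surjective hf]
  have hpG := hI _ _ (hK.comap f) (hKL.comap hf) p hp
    (by rwa [← Subgroup.index_normalizer_map_equiv e, hX])
  rwa [← Subgroup.card_map_of_injective (f := e.toMonoidHom) e.injective, hX] at hpG

theorem PiSupplemented.map {f : G →* Q}
    (hf : Function.Surjective f) {H : Subgroup G} (hH : f.ker ≤ H) (hPi : PiSupplemented G H) :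
    PiSupplemented Q (H.map f) := by
  obtain ⟨T, hHT, I, hTI, hIH, hI⟩ := hPi
  refine ⟨T.map f, ?_, I.map f, ?_, Subgroup.map_mono hIH, hI.map hf⟩
  · rw [Subgroup.coe_map, Subgroup.coe_map, ← Set.image_mul, hHT,
      Set.image_univ_of_surjective hf]
  · rw [← Subgroup.map_inf_of_ker_le hH]
    exact Subgroup.map_mono hTI

end

theorem piSupplemented_quotient_of_le_general {G : Type*} [Group G]
    (H N : Subgroup G) [N.Normal] (hNH : N ≤ H) (h : PiSupplemented G H) :
    PiSupplemented (G ⧸ N) (Subgroup.map (QuotientGroup.mk' N) H) :=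
  h.map (QuotientGroup.mk'_surjective N) (by rwa [QuotientGroup.ker_mk'])

theorem piSupplemented_quotient_of_le {G : Type*} [Group G] [Finite G]
    (H N : Subgroup G) [N.Normal] (hNH : N ≤ H) (h : PiSupplemented G H) :
    PiSupplemented (G ⧸ N) (Subgroup.map (QuotientGroup.mk' N) H) :=
  piSupplemented_quotient_of_le_general H N hNH h
end

section
/- Let G be a finite group and P a Sylow p-subgroup of G with gcd(|G|, p-1) = 1. If every subgroup of P of order p has a complement in G, then G is p-nilpotent. -/
open scoped Pointwise

/-- `G` is `p`-nilpotent: it has a normal `p`-complement, i.e. a normal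
subgroup of order coprime to `p` and of `p`-power index. -/
def IsPNilpotent (p : ℕ) (G : Type*) [Group G] : Prop :=
  ∃ N : Subgroup G, N.Normal ∧ Nat.Coprime (Nat.card N) p ∧ ∃ k : ℕ, N.index = p ^ k

/-! Let `N` be the intersection of the normal subgroups of index `p`. Every `x ^ p` lies in `N`, so
`G ⧸ N` is a `p`-group and it suffices that `N` contains no element `g` of order `p`. A conjugate of `g` lies in `P`,
hence has a complement `T`, of index `p`. The image `W` of `G` in the symmetric group on `G ⧸ T`
has order divisible by `p` but not by `p²`, so a Sylow `p`-subgroup `C` of `W` has order `p`.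
As `N_W(C) / C_W(C)` embeds in `Aut C`, of order `p - 1` coprime to `|W|`, Burnside's transfer
theorem gives `W` a normal `p`-complement; its preimage in `G` is normal of index `p` and misses
`g`, whose image in `W` has order `p`. -/

open Subgroup

theorem Nat.Prime.not_sq_dvd_factorial {p : ℕ} (hp : p.Prime) : ¬ p ^ 2 ∣ p.factorial := by
  rw [← Nat.mul_factorial_pred hp.ne_zero, sq, Nat.mul_dvd_mul_iff_left hp.pos, hp.dvd_factorial]
  have := hp.pos
  omega

theorem Subgroup.normalizer_le_centralizer_of_coprime {G : Type*} [Group G] (H : Subgroup G)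
    (h : Nat.Coprime (Nat.card G) (Nat.card (MulAut H))) :
    normalizer (H : Set G) ≤ centralizer (H : Set G) := by
  have key := card_dvd_of_injective _ (QuotientGroup.kerLift_injective H.normalizerMonoidHom)
  rw [normalizerMonoidHom_ker, ← index, ← relIndex] at key
  exact relIndex_eq_one.mp (Nat.eq_one_of_dvd_coprimes h (relIndex_dvd_card _ _ |>.trans
    (card_subgroup_dvd_card _)) key)

theorem Subgroup.normalizer_le_centralizer_of_card_eq_prime {G : Type*} [Group G] [Finite G]
    {p : ℕ} (hp : p.Prime) {C : Subgroup G} (hC : Nat.card C = p)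
    (hcop : Nat.Coprime (Nat.card G) (p - 1)) :
    normalizer (C : Set G) ≤ centralizer (C : Set G) := by
  have : Fact p.Prime := ⟨hp⟩
  have := isCyclic_of_prime_card hC
  apply C.normalizer_le_centralizer_of_coprime
  rwa [IsCyclic.card_mulAut, hC, Nat.totient_prime hp]

theorem Sylow.card_eq_of_dvd_of_not_sq_dvd {G : Type*} [Group G] [Finite G] {p : ℕ}
    [Fact p.Prime] (C : Sylow p G) (h : p ∣ Nat.card G) (h2 : ¬ p ^ 2 ∣ Nat.card G) :
    Nat.card C = p := by
  obtain ⟨k, hk⟩ := C.2.exists_card_eq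
  have hp := (Fact.out : p.Prime).one_lt
  have hk1 : 1 ≤ k := by
    rw [← Nat.pow_dvd_pow_iff_le_right hp, ← hk]
    exact C.pow_dvd_card_of_pow_dvd_card (by rwa [pow_one])
  have hk2 : k < 2 := by
    by_contra! hk2
    exact h2 ((pow_dvd_pow p hk2).trans (hk ▸ card_subgroup_dvd_card (C : Subgroup G)))
  rw [hk, show k = 1 by omega, pow_one]

theorem Subgroup.exists_index_eq_pow_of_pow_mem {G : Type*} [Group G] {p : ℕ} [Fact p.Prime]
    (N : Subgroup G) [N.Normal] [N.FiniteIndex] (h : ∀ x, x ^ p ∈ N) :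
    ∃ k, N.index = p ^ k := by
  have : IsPGroup p (G ⧸ N) := fun q => ⟨1, by
    induction q using QuotientGroup.induction_on with
    | H x => rw [pow_one, ← QuotientGroup.mk_pow, QuotientGroup.eq_one_iff]; exact h x⟩
  exact this.exists_card_eq

theorem Sylow.exists_conj_mem_of_orderOf_eq {G : Type*} [Group G] [Finite G] {p : ℕ}
    [Fact p.Prime] (P : Sylow p G) {g : G} (hg : orderOf g = p) :
    ∃ c : G, c * g * c⁻¹ ∈ P := by
  have : IsPGroup p (zpowers g) := .of_card (n := 1) (by rw [Nat.card_zpowers, hg, pow_one])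
  obtain ⟨Q, hQ⟩ := this.exists_le_sylow
  obtain ⟨c, rfl⟩ := MulAction.exists_smul_eq G Q P
  refine ⟨c, ?_⟩
  change _ ∈ ((c • Q : Sylow p G) : Subgroup G)
  rw [Sylow.coe_subgroup_smul, ← MulAut.conj_apply]
  exact smul_mem_pointwise_smul _ _ _ (hQ (mem_zpowers g))

theorem exists_normal_index_eq_prime_notMem {G : Type*} [Group G] [Finite G] {p : ℕ}
    (hp : p.Prime) (hcop : Nat.Coprime (Nat.card G) (p - 1)) {T : Subgroup G} (hT : T.index = p)
    {g : G} (hg : orderOf g = p) (hgT : g ∉ T) :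
    ∃ M : Subgroup G, M.Normal ∧ M.index = p ∧ g ∉ M := by
  have : Fact p.Prime := ⟨hp⟩
  let f := MulAction.toPermHom G (G ⧸ T)
  have hfg : orderOf (f.rangeRestrict g) = p := by
    refine (hp.eq_one_or_self_of_dvd _ (hg ▸ orderOf_map_dvd _ g)).resolve_left fun h => hgT ?_
    rw [orderOf_eq_one_iff, ← MonoidHom.mem_ker, MonoidHom.ker_rangeRestrict,
      ← normalCore_eq_ker] at h
    exact T.normalCore_le h
  have hW : Nat.card f.range ∣ Nat.card G := index_ker f ▸ f.ker.index_dvd_card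
  have hpW : p ∣ Nat.card f.range := hfg ▸ orderOf_dvd_natCard _
  have hp2W : ¬ p ^ 2 ∣ Nat.card f.range := fun h => hp.not_sq_dvd_factorial <| by
    have := h.trans (card_subgroup_dvd_card f.range)
    rwa [Nat.card_perm, ← index, hT] at this
  let C : Sylow p f.range := default
  have hC : Nat.card C = p := C.card_eq_of_dvd_of_not_sq_dvd hpW hp2W
  have hNC := normalizer_le_centralizer_of_card_eq_prime hp hC (hcop.coprime_dvd_left hW)
  let K := (MonoidHom.transferSylow C hNC).ker
  refine ⟨K.comap f.rangeRestrict, normal_comap _, ?_, fun hgK => ?_⟩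
  · rw [index_comap_of_surjective _ f.rangeRestrict_surjective,
      (MonoidHom.ker_transferSylow_isComplement' C hNC).symm.index_eq_card, hC]
  · exact MonoidHom.not_dvd_card_ker_transferSylow C hNC (hfg ▸ K.orderOf_dvd_natCard hgK)

theorem exists_normal_index_eq_prime_notMem_of_complemented {G : Type*} [Group G] [Finite G]
    {p : ℕ} (hp : p.Prime) (hcop : Nat.Coprime (Nat.card G) (p - 1)) (P : Sylow p G)
    (hcomp : ∀ H : Subgroup G, H ≤ (P : Subgroup G) → Nat.card H = p →
      ∃ T : Subgroup G, (H : Set G) * (T : Set G) = (Set.univ : Set G) ∧ H ⊓ T = ⊥)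
    {g : G} (hg : orderOf g = p) :
    ∃ M : Subgroup G, M.Normal ∧ M.index = p ∧ g ∉ M := by
  have : Fact p.Prime := ⟨hp⟩
  obtain ⟨c, hcP⟩ := P.exists_conj_mem_of_orderOf_eq hg
  have hcg : orderOf (c * g * c⁻¹) = p := by rw [← MulAut.conj_apply, MulEquiv.orderOf_eq, hg]
  obtain ⟨T, hmul, hinf⟩ := hcomp (zpowers (c * g * c⁻¹)) (zpowers_le.mpr hcP)
    (by rw [Nat.card_zpowers, hcg])
  have hT : T.index = p := by
    rw [(isComplement'_of_disjoint_and_mul_eq_univ (disjoint_iff.mpr hinf) hmul).index_eq_card,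
      Nat.card_zpowers, hcg]
  have hcgT : c * g * c⁻¹ ∉ T := fun h => by
    have : c * g * c⁻¹ ∈ zpowers (c * g * c⁻¹) ⊓ T := ⟨mem_zpowers _, h⟩
    rw [hinf, mem_bot, ← orderOf_eq_one_iff, hcg] at this
    exact hp.one_lt.ne' this
  obtain ⟨M, hM, hMp, hcgM⟩ := exists_normal_index_eq_prime_notMem hp hcop hT hcg hcgT
  exact ⟨M, hM, hMp, fun hgM => hcgM (hM.conj_mem g hgM c)⟩

theorem pNilpotent_of_complemented_order_p {G : Type*} [Group G] [Finite G]
    (p : ℕ) (hp : p.Prime) (hcop : Nat.gcd (Nat.card G) (p - 1) = 1)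
    (P : Sylow p G)
    (hcomp : ∀ H : Subgroup G, H ≤ (P : Subgroup G) → Nat.card H = p →
      ∃ T : Subgroup G, (H : Set G) * (T : Set G) = (Set.univ : Set G) ∧ H ⊓ T = ⊥) :
    IsPNilpotent p G := by
  have : Fact p.Prime := ⟨hp⟩
  let N := ⨅ M : {M : Subgroup G // M.Normal ∧ M.index = p}, (M : Subgroup G)
  have hN : N.Normal := normal_iInf_normal fun M => M.2.1
  have hpow : ∀ x : G, x ^ p ∈ N := fun x =>
    mem_iInf.mpr fun ⟨M, hM, hMp⟩ => hMp ▸ M.pow_index_mem x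
  refine ⟨N, hN, ?_, N.exists_index_eq_pow_of_pow_mem hpow⟩
  rw [Nat.coprime_comm, hp.coprime_iff_not_dvd]
  intro hpN
  obtain ⟨g, hg⟩ := exists_prime_orderOf_dvd_card' p hpN
  obtain ⟨M, hM, hMp, hgM⟩ :=
    exists_normal_index_eq_prime_notMem_of_complemented hp hcop P hcomp (g := g)
      (by rwa [orderOf_coe])
  exact hgM (mem_iInf.mp g.2 ⟨M, hM, hMp⟩)
end
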